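/- arXiv:2411.12003 — 5 statements merged into one kernel-verified Lean document; each statement's English description precedes it below -/
import Mathlib

section
/- Let B ∈ SL(2,ℝ), let v ∈ ℝ² be a nonzero vector, let x > 0, and set r = 2e^{−x/2}. If for each i = 1, 2 the angle between the lines spanned by B⁻¹eᵢ and by v is at least r (i.e. min(∠(B⁻¹eᵢ, v), π − ∠(B⁻¹eᵢ, v)) ≥ r, where ∠ is the angle between nonzero vectors), then Θ(B, v) := log(‖B‖·|v|) − log(|Bv|) ≤ x. -/
/-!
Write `uᵢ = B⁻¹eᵢ`. Since `B⁻¹ = adj B`, the cross product of `uᵢ` with `v` is, up to sign, a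
coordinate of `Bv`, so `|Bv|² = ∑ᵢ sin² ∠(uᵢ, v) |uᵢ|² |v|²`, while `∑ᵢ |uᵢ|²` is the squared
Frobenius norm of `B`, which dominates `‖B‖²`. An angular separation of at least `r` therefore
gives `|Bv| ≥ sin r · ‖B‖ |v|`, and as `r ≤ π/2`, Jordan's inequality gives
`sin r ≥ 2r/π ≥ (r/2)² = e^{-x}`.
-/

open MeasureTheory Real

noncomputable section

/-- The continuous linear map on Euclidean ℝ² induced by a 2×2 matrix. -/
noncomputable def matCLM (B : Matrix (Fin 2) (Fin 2) ℝ) :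
    EuclideanSpace ℝ (Fin 2) →L[ℝ] EuclideanSpace ℝ (Fin 2) :=
  LinearMap.toContinuousLinearMap (Matrix.toEuclideanLin B)

/-- The operator norm of a 2×2 matrix with respect to the Euclidean norm on ℝ². -/
noncomputable def matOpNorm (B : Matrix (Fin 2) (Fin 2) ℝ) : ℝ := ‖matCLM B‖

end

open InnerProductGeometry

lemma matCLM_apply (M : Matrix (Fin 2) (Fin 2) ℝ) (w : EuclideanSpace ℝ (Fin 2)) (i : Fin 2) :
    matCLM M w i = M i 0 * w 0 + M i 1 * w 1 := by
  fin_cases i <;> simp [matCLM, Matrix.mulVec, dotProduct, Fin.sum_univ_two]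

lemma matCLM_single (M : Matrix (Fin 2) (Fin 2) ℝ) (i j : Fin 2) :
    matCLM M (EuclideanSpace.single i 1) j = M j i := by
  fin_cases i <;> simp [matCLM_apply]

lemma EuclideanSpace.norm_sq_fin_two (w : EuclideanSpace ℝ (Fin 2)) :
    ‖w‖ ^ 2 = w 0 ^ 2 + w 1 ^ 2 := by
  simp [EuclideanSpace.real_norm_sq_eq, Fin.sum_univ_two]

lemma sin_angle_sq_mul_eq_sq_cross (u w : EuclideanSpace ℝ (Fin 2)) :
    sin (angle u w) ^ 2 * (‖u‖ ^ 2 * ‖w‖ ^ 2) = (u 0 * w 1 - u 1 * w 0) ^ 2 := by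
  have hcross := sin_angle_mul_norm_mul_norm u w
  simp only [PiLp.inner_apply, RCLike.inner_apply, conj_trivial, Fin.sum_univ_two] at hcross
  calc sin (angle u w) ^ 2 * (‖u‖ ^ 2 * ‖w‖ ^ 2) = (sin (angle u w) * (‖u‖ * ‖w‖)) ^ 2 := by ring
    _ = (u 0 * w 1 - u 1 * w 0) ^ 2 := by
      rw [hcross, sq_sqrt (by nlinarith [sq_nonneg (u 0 * w 1 - u 1 * w 0)])]
      ring

lemma matOpNorm_sq_le_sum_sq (M : Matrix (Fin 2) (Fin 2) ℝ) :
    matOpNorm M ^ 2 ≤ ∑ i, ∑ j, M i j ^ 2 := by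
  have hF : 0 ≤ ∑ i, ∑ j, M i j ^ 2 := by positivity
  have hop : matOpNorm M ≤ √(∑ i, ∑ j, M i j ^ 2) := by
    refine (matCLM M).opNorm_le_bound (sqrt_nonneg _) fun w ↦ ?_
    rw [← sqrt_sq (norm_nonneg (matCLM M w)), ← sqrt_sq (norm_nonneg w), ← sqrt_mul hF]
    refine sqrt_le_sqrt ?_
    simp only [EuclideanSpace.norm_sq_fin_two, matCLM_apply, Fin.sum_univ_two]
    nlinarith [sq_nonneg (M 0 0 * w 1 - M 0 1 * w 0), sq_nonneg (M 1 0 * w 1 - M 1 1 * w 0)]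
  calc matOpNorm M ^ 2 ≤ √(∑ i, ∑ j, M i j ^ 2) ^ 2 := by
        gcongr
        exact norm_nonneg (matCLM M)
    _ = ∑ i, ∑ j, M i j ^ 2 := sq_sqrt hF

section Adjugate

variable (M : Matrix (Fin 2) (Fin 2) ℝ)

lemma sum_norm_sq_matCLM_adjugate_single :
    ∑ i, ‖matCLM M.adjugate (EuclideanSpace.single i 1)‖ ^ 2 = ∑ i, ∑ j, M i j ^ 2 := by
  simp only [Fin.sum_univ_two, EuclideanSpace.norm_sq_fin_two, matCLM_single,
    Matrix.adjugate_fin_two, Matrix.of_apply, Matrix.cons_val', Matrix.cons_val_zero,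
    Matrix.cons_val_one, Matrix.cons_val_fin_one]
  ring

lemma norm_sq_matCLM_eq_sum_sin_angle_adjugate_single (v : EuclideanSpace ℝ (Fin 2)) :
    ‖matCLM M v‖ ^ 2 = ∑ i, sin (angle (matCLM M.adjugate (EuclideanSpace.single i 1)) v) ^ 2
        * (‖matCLM M.adjugate (EuclideanSpace.single i 1)‖ ^ 2 * ‖v‖ ^ 2) := by
  rw [Fin.sum_univ_two, sin_angle_sq_mul_eq_sq_cross, sin_angle_sq_mul_eq_sq_cross]
  simp only [matCLM_single, Matrix.adjugate_fin_two, Matrix.of_apply, Matrix.cons_val',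
    Matrix.cons_val_zero, Matrix.cons_val_one, Matrix.cons_val_fin_one]
  simp only [EuclideanSpace.norm_sq_fin_two, matCLM_apply]
  ring

lemma mul_matOpNorm_mul_norm_le_of_le_sin_angle_adjugate (v : EuclideanSpace ℝ (Fin 2)) {s : ℝ}
    (hs : 0 ≤ s) (h : ∀ i, s ≤ sin (angle (matCLM M.adjugate (EuclideanSpace.single i 1)) v)) :
    s * (matOpNorm M * ‖v‖) ≤ ‖matCLM M v‖ := by
  refine pow_le_pow_iff_left₀ (by positivity [norm_nonneg (matCLM M)]) (norm_nonneg _)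
    two_ne_zero |>.1 ?_
  calc (s * (matOpNorm M * ‖v‖)) ^ 2 = s ^ 2 * ‖v‖ ^ 2 * matOpNorm M ^ 2 := by ring
    _ ≤ s ^ 2 * ‖v‖ ^ 2 * ∑ i, ∑ j, M i j ^ 2 := by
      gcongr
      exact matOpNorm_sq_le_sum_sq M
    _ = ∑ i, s ^ 2 * (‖matCLM M.adjugate (EuclideanSpace.single i 1)‖ ^ 2 * ‖v‖ ^ 2) := by
      rw [← sum_norm_sq_matCLM_adjugate_single, Finset.mul_sum]
      ring_nf
    _ ≤ ‖matCLM M v‖ ^ 2 := by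
      rw [norm_sq_matCLM_eq_sum_sin_angle_adjugate_single]
      gcongr with i
      exact h i

end Adjugate

lemma sin_le_sin_of_le_of_le_pi_sub {r θ : ℝ} (hr : 0 ≤ r) (h₁ : r ≤ θ) (h₂ : r ≤ π - θ) :
    sin r ≤ sin θ := by
  rcases le_total θ (π / 2) with hθ | hθ
  · exact sin_le_sin_of_le_of_le_pi_div_two (by linarith) hθ h₁
  · rw [← sin_pi_sub θ]
    exact sin_le_sin_of_le_of_le_pi_div_two (by linarith) (by linarith) h₂

lemma sq_le_sin_two_mul {s : ℝ} (hs : 0 ≤ s) (h : 2 * s ≤ π / 2) : s ^ 2 ≤ sin (2 * s) := by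
  have hjordan := mul_le_sin (by positivity : 0 ≤ 2 * s) h
  rw [div_mul_eq_mul_div, div_le_iff₀ pi_pos] at hjordan
  nlinarith [pi_le_four, pi_pos]

lemma log_sub_log_le_neg_log {a b c : ℝ} (ha : 0 ≤ a) (hc : 0 < c) (hc₁ : c ≤ 1)
    (hlow : c * a ≤ b) (hup : b ≤ a) : log a - log b ≤ -log c := by
  rcases ha.eq_or_lt with rfl | ha
  · simp [le_antisymm hup (by simpa using hlow), log_nonpos hc.le hc₁]
  · have := log_le_log (mul_pos hc ha) hlow
    rw [log_mul hc.ne' ha.ne'] at this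
    linarith

theorem loss_of_expansion_estimate_general
    (B : Matrix.SpecialLinearGroup (Fin 2) ℝ) (v : EuclideanSpace ℝ (Fin 2))
    (x : ℝ) (r : ℝ) (hr : r = 2 * Real.exp (-x / 2))
    (h : ∀ i : Fin 2,
      r ≤ min
        (InnerProductGeometry.angle
          (matCLM ((B⁻¹ : Matrix.SpecialLinearGroup (Fin 2) ℝ) : Matrix (Fin 2) (Fin 2) ℝ)
            (EuclideanSpace.single i 1)) v)
        (π - InnerProductGeometry.angle
          (matCLM ((B⁻¹ : Matrix.SpecialLinearGroup (Fin 2) ℝ) : Matrix (Fin 2) (Fin 2) ℝ)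
            (EuclideanSpace.single i 1)) v)) :
    Real.log (matOpNorm (B : Matrix (Fin 2) (Fin 2) ℝ) * ‖v‖)
      - Real.log ‖matCLM (B : Matrix (Fin 2) (Fin 2) ℝ) v‖ ≤ x := by
  rw [Matrix.SpecialLinearGroup.coe_inv] at h
  have hr₀ : 0 ≤ r := hr ▸ by positivity
  have hsin : ∀ i, exp (-x) ≤ sin (angle (matCLM (B : Matrix (Fin 2) (Fin 2) ℝ).adjugate
      (EuclideanSpace.single i 1)) v) := fun i ↦ by
    obtain ⟨h₁, h₂⟩ := le_min_iff.1 (h i)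
    calc exp (-x) = exp (-x / 2) ^ 2 := by rw [← exp_nat_mul]; ring_nf
      _ ≤ sin r := hr ▸ sq_le_sin_two_mul (exp_pos _).le (by linarith)
      _ ≤ _ := sin_le_sin_of_le_of_le_pi_sub hr₀ h₁ h₂
  have hlow := mul_matOpNorm_mul_norm_le_of_le_sin_angle_adjugate _ v (exp_pos _).le hsin
  have hup : ‖matCLM B v‖ ≤ matOpNorm B * ‖v‖ := (matCLM B).le_opNorm v
  simpa using log_sub_log_le_neg_log (by positivity [norm_nonneg (matCLM B)]) (exp_pos (-x))
    ((hsin 0).trans (sin_le_one _)) hlow hup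

/-- **Loss-of-expansion estimate.** If the direction of `v` is at angular distance at least
`r = 2e^{−x/2}` from both `B⁻¹e₁` and `B⁻¹e₂`, then
`Θ(B,v) = log(‖B‖·|v|) − log(|Bv|) ≤ x`. -/
theorem loss_of_expansion_estimate
    (B : Matrix.SpecialLinearGroup (Fin 2) ℝ) (v : EuclideanSpace ℝ (Fin 2)) (hv : v ≠ 0)
    (x : ℝ) (hx : 0 < x) (r : ℝ) (hr : r = 2 * Real.exp (-x / 2))
    (h : ∀ i : Fin 2,
      r ≤ min
        (InnerProductGeometry.angle
          (matCLM ((B⁻¹ : Matrix.SpecialLinearGroup (Fin 2) ℝ) : Matrix (Fin 2) (Fin 2) ℝ)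
            (EuclideanSpace.single i 1)) v)
        (π - InnerProductGeometry.angle
          (matCLM ((B⁻¹ : Matrix.SpecialLinearGroup (Fin 2) ℝ) : Matrix (Fin 2) (Fin 2) ℝ)
            (EuclideanSpace.single i 1)) v)) :
    Real.log (matOpNorm (B : Matrix (Fin 2) (Fin 2) ℝ) * ‖v‖)
      - Real.log ‖matCLM (B : Matrix (Fin 2) (Fin 2) ℝ) v‖ ≤ x :=
  loss_of_expansion_estimate_general B v x r hr h
end

section
/- For every constant C₃ > 0 there exists ρ₀ > 0 with 3·C₃·ρ₀³ < 1/100 such that for every real random variable X with E[X] = 0, Var(X) = 1, and E|X|³ < C₃, and for every t with 0 < |t| ≤ ρ₀, one has |φ_X(t)·e^{t²/2} − 1| ≤ 1/100 (in particular φ_X(t) ≠ 0) and |Log(φ_X(t)·e^{t²/2})| ≤ 3·C₃·|t|³, where Log denotes the principal branch of the complex logarithm. -/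
open MeasureTheory ProbabilityTheory Filter Topology

universe u

/-- The standardization `(X - E X)/√(Var X)` of a real random variable. -/
noncomputable def stdize {Ω : Type u} [MeasureSpace Ω] (X : Ω → ℝ) (ω : Ω) : ℝ :=
  (X ω - ∫ ω', X ω') / Real.sqrt (variance X ℙ)

/-- The characteristic function `φ_X(t) = E[exp(itX)]` of a real random variable. -/
noncomputable def charFun' {Ω : Type u} [MeasureSpace Ω] (X : Ω → ℝ) (t : ℝ) : ℂ :=
  ∫ ω, Complex.exp (Complex.I * ((t * X ω : ℝ) : ℂ))

/-!
Integrating the bound `|x|ⁿ/n!` on one Taylor remainder of `e^{ix}` bounds the next one, so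
`|e^{ix} - (1 + ix - x²/2)| ≤ |x|³/6` and hence `|φ_X(t) - (1 - t²/2)| ≤ |t|³ E|X|³/6`. As also
`|e^{-t²/2} - (1 - t²/2)| ≤ t⁴/4`, multiplying by `e^{t²/2} ≤ 2` puts `φ_X(t)e^{t²/2}` within
`(5/6)C₃|t|³ ≤ 1/720` of `1` once `|t| ≤ min(1, C₃)` and `C₃|t|³ ≤ 1/600`; finally
`|Log(1 + w)| ≤ (3/2)|w|` for `|w| ≤ 1/2`.
-/

open Complex Finset Nat

lemma hasDerivAt_pow_succ_div_factorial (n : ℕ) (y : ℝ) :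
    HasDerivAt (fun y : ℝ => y ^ (n + 1) / (n + 1)!) (y ^ n / n !) y := by
  refine ((hasDerivAt_pow (n + 1) y).div_const ((n + 1)! : ℝ)).congr_deriv ?_
  rw [Nat.factorial_succ, Nat.cast_mul, add_tsub_cancel_right, mul_div_mul_left]
  positivity

section

variable {E : Type*} [NormedAddCommGroup E] [NormedSpace ℝ E] {f f' : ℝ → E} {n : ℕ}

lemma norm_le_pow_succ_div_factorial_of_norm_deriv_le (hf : ∀ y, HasDerivAt f (f' y) y)
    (hf0 : f 0 = 0) (hf' : ∀ y, 0 ≤ y → ‖f' y‖ ≤ y ^ n / n !) {x : ℝ} (hx : 0 ≤ x) :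
    ‖f x‖ ≤ x ^ (n + 1) / (n + 1)! :=
  image_norm_le_of_norm_deriv_right_le_deriv_boundary (a := 0) (b := x)
    (fun y _ => (hf y).continuousAt.continuousWithinAt) (fun y _ => (hf y).hasDerivWithinAt)
    (by simp [hf0]) (hasDerivAt_pow_succ_div_factorial n) (fun y hy => hf' y hy.1) ⟨hx, le_rfl⟩

lemma norm_le_abs_pow_succ_div_factorial_of_norm_deriv_le (hf : ∀ y, HasDerivAt f (f' y) y)
    (hf0 : f 0 = 0) (hf' : ∀ y, ‖f' y‖ ≤ |y| ^ n / n !) (x : ℝ) :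
    ‖f x‖ ≤ |x| ^ (n + 1) / (n + 1)! := by
  rcases le_total 0 x with hx | hx
  · rw [abs_of_nonneg hx]
    exact norm_le_pow_succ_div_factorial_of_norm_deriv_le hf hf0
      (fun y hy => by simpa [abs_of_nonneg hy] using hf' y) hx
  · have hneg : ∀ y, HasDerivAt (fun y => f (-y)) (-f' (-y)) y := fun y => by
      simpa [Function.comp_def] using (hf (-y)).scomp y (hasDerivAt_neg y)
    simpa [abs_of_nonpos hx] using norm_le_pow_succ_div_factorial_of_norm_deriv_le hneg
      (by simpa using hf0) (fun y hy => by simpa [abs_of_nonneg hy] using hf' (-y))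
      (neg_nonneg.2 hx)

end

lemma hasDerivAt_sum_I_mul_ofReal_pow_div_factorial (n : ℕ) (x : ℝ) :
    HasDerivAt (fun y : ℝ => ∑ k ∈ range (n + 1), (I * (y : ℂ)) ^ k / (k ! : ℂ))
      (I * ∑ k ∈ range n, (I * (x : ℂ)) ^ k / (k ! : ℂ)) x := by
  induction n with
  | zero => simpa using hasDerivAt_const x (1 : ℂ)
  | succ n ih =>
    rw [sum_range_succ, mul_add]
    simp_rw [sum_range_succ _ (n + 1)]
    refine ih.add ?_
    have h := (((hasDerivAt_id x).ofReal_comp.const_mul I).pow (n + 1)).div_const ((n + 1)! : ℂ)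
    refine h.congr_deriv ?_
    simp only [id, add_tsub_cancel_right, ofReal_one, Nat.factorial_succ, Nat.cast_mul]
    field_simp

lemma norm_cexp_I_mul_ofReal_sub_sum_le (n : ℕ) (x : ℝ) :
    ‖exp (I * x) - ∑ k ∈ range n, (I * (x : ℂ)) ^ k / (k ! : ℂ)‖ ≤ |x| ^ n / n ! := by
  induction n generalizing x with
  | zero => simp
  | succ n ih =>
    refine norm_le_abs_pow_succ_div_factorial_of_norm_deriv_le
      (f := fun y => exp (I * y) - ∑ k ∈ range (n + 1), (I * (y : ℂ)) ^ k / (k ! : ℂ))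
      (f' := fun y => I * (exp (I * y) - ∑ k ∈ range n, (I * (y : ℂ)) ^ k / (k ! : ℂ)))
      (fun y => ?_) ?_ (fun y => by simpa using ih y) x
    · have he : HasDerivAt (fun y : ℝ => exp (I * y)) (exp (I * y) * I) y :=
        ((hasDerivAt_id y).ofReal_comp.const_mul I).cexp.congr_deriv (by simp)
      exact (he.sub (hasDerivAt_sum_I_mul_ofReal_pow_div_factorial n y)).congr_deriv (by ring)
    · simp [sum_range_succ']

lemma norm_cexp_I_mul_ofReal_sub_quadratic_le (x : ℝ) :
    ‖exp (I * x) - (1 + I * x + (I * x) ^ 2 / 2)‖ ≤ |x| ^ 3 / 6 := by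
  simpa [sum_range_succ, add_assoc, Nat.factorial] using norm_cexp_I_mul_ofReal_sub_sum_le 3 x

lemma norm_mul_cexp_sub_one_le {w : ℂ} {u : ℝ} (hu₀ : 0 ≤ u) (hu : u ≤ 1 / 2) :
    ‖w * exp (u : ℂ) - 1‖ ≤ 2 * (‖w - ((1 - u : ℝ) : ℂ)‖ + u ^ 2) := by
  have hsplit : w * exp (u : ℂ) - 1
      = exp (u : ℂ) * ((w - ((1 - u : ℝ) : ℂ)) + ((1 - u - Real.exp (-u) : ℝ) : ℂ)) := by
    push_cast
    have : exp (u : ℂ) * exp (-u : ℂ) = 1 := by rw [← exp_add, add_neg_cancel, exp_zero]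
    linear_combination this
  have hexp : Real.exp u ≤ 2 :=
    (Real.exp_bound_div_one_sub_of_interval hu₀ (by linarith)).trans
      (by rw [div_le_iff₀ (by linarith)]; linarith)
  have hgauss : |1 - u - Real.exp (-u)| ≤ u ^ 2 := by
    have := Real.abs_exp_sub_one_sub_id_le (x := -u) (by rw [abs_neg, abs_of_nonneg hu₀]; linarith)
    rwa [neg_sq, ← abs_neg, show -(Real.exp (-u) - 1 - -u) = 1 - u - Real.exp (-u) by ring] at this
  rw [hsplit, norm_mul, norm_exp_ofReal]
  gcongr
  exact (norm_add_le _ _).trans (by rw [norm_real, Real.norm_eq_abs]; gcongr)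

section

variable {Ω : Type*} [MeasureSpace Ω] [IsProbabilityMeasure (ℙ : Measure Ω)] {X : Ω → ℝ}

lemma norm_charFun'_sub_one_sub_sq_div_two_le (hX : Measurable X)
    (h3 : Integrable (fun ω => |X ω| ^ 3)) (h0 : ∫ ω, X ω = 0) (h1 : variance X ℙ = 1) (t : ℝ) :
    ‖charFun' X t - ((1 - t ^ 2 / 2 : ℝ) : ℂ)‖ ≤ |t| ^ 3 / 6 * ∫ ω, |X ω| ^ 3 := by
  have hmom : ∀ p ≤ 3, Integrable (fun ω => |X ω| ^ p) := fun p hp => by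
    simpa using integrable_norm_pow_of_le hX.aestronglyMeasurable hp (by simpa using h3)
  have hX1 : Integrable (fun ω => (X ω : ℂ)) :=
    ((integrable_norm_iff hX.aestronglyMeasurable).1 (by simpa using hmom 1 (by norm_num))).ofReal
  have hX2 : Integrable (fun ω => ((X ω ^ 2 : ℝ) : ℂ)) :=
    (show Integrable (fun ω => X ω ^ 2) by simpa using hmom 2 (by norm_num)).ofReal
  have hsq : ∫ ω, X ω ^ 2 = 1 := by rw [← variance_of_integral_eq_zero hX.aemeasurable h0, h1]
  have hexp : Integrable (fun ω => exp (I * ((t * X ω : ℝ) : ℂ))) :=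
    Integrable.of_bound (by fun_prop) 1 (ae_of_all _ fun ω => (norm_exp_I_mul_ofReal _).le)
  have hlin : Integrable (fun ω => 1 + I * t * (X ω : ℂ)) :=
    (integrable_const 1).add (hX1.const_mul _)
  have hquad : Integrable (fun ω => (t : ℂ) ^ 2 / 2 * ((X ω ^ 2 : ℝ) : ℂ)) := hX2.const_mul _
  have hpolyInt : Integrable
      (fun ω => 1 + I * t * (X ω : ℂ) - (t : ℂ) ^ 2 / 2 * ((X ω ^ 2 : ℝ) : ℂ)) :=
    hlin.sub hquad
  have hpoly : ∫ ω, (1 + I * t * (X ω : ℂ) - (t : ℂ) ^ 2 / 2 * ((X ω ^ 2 : ℝ) : ℂ))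
      = ((1 - t ^ 2 / 2 : ℝ) : ℂ) := by
    rw [integral_sub hlin hquad, integral_add (integrable_const 1) (hX1.const_mul _),
      integral_const_mul, integral_const_mul, integral_complex_ofReal, integral_complex_ofReal,
      h0, hsq]
    simp
  rw [← hpoly, charFun', ← integral_sub hexp hpolyInt]
  refine (norm_integral_le_of_norm_le (h3.const_mul (|t| ^ 3 / 6))
    (ae_of_all _ fun ω => ?_)).trans_eq (integral_const_mul _ _)
  have htaylor : 1 + I * t * (X ω : ℂ) - (t : ℂ) ^ 2 / 2 * ((X ω ^ 2 : ℝ) : ℂ)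
      = 1 + I * ((t * X ω : ℝ) : ℂ) + (I * ((t * X ω : ℝ) : ℂ)) ^ 2 / 2 := by
    push_cast
    linear_combination (-(t : ℂ) ^ 2 * (X ω : ℂ) ^ 2 / 2) * I_sq
  rw [htaylor]
  refine (norm_cexp_I_mul_ofReal_sub_quadratic_le (t * X ω)).trans_eq ?_
  rw [abs_mul, mul_pow]
  ring

end

lemma exists_pos_le_one_le_and_mul_pow_three_le {C : ℝ} (hC : 0 < C) :
    ∃ ρ > 0, ρ ≤ 1 ∧ ρ ≤ C ∧ C * ρ ^ 3 ≤ 1 / 600 := by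
  set ρ := min (min 1 C) (1 / (600 * C))
  have hρ : 0 < ρ := lt_min (lt_min one_pos hC) (by positivity)
  have hρ1 : ρ ≤ 1 := (min_le_left _ _).trans (min_le_left _ _)
  refine ⟨ρ, hρ, hρ1, (min_le_left _ _).trans (min_le_right _ _), ?_⟩
  calc C * ρ ^ 3 ≤ C * (1 / (600 * C)) := by
        gcongr
        exact (pow_le_of_le_one hρ.le hρ1 (by norm_num)).trans (min_le_right _ _)
    _ = 1 / 600 := by field_simp

/-- **Initial bound for the bootstrapping argument.** For every `C₃ > 0` there is `ρ₀ > 0`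
with `3C₃ρ₀³ < 1/100` such that every standardized random variable `X` with third absolute
moment `< C₃` satisfies, for `0 < |t| ≤ ρ₀`: `|φ_X(t)e^{t²/2} − 1| ≤ 1/100`, `φ_X(t) ≠ 0`, and
`|Log(φ_X(t)e^{t²/2})| ≤ 3C₃|t|³`. -/
theorem charFun_initial_log_bound (C₃ : ℝ) (hC₃ : 0 < C₃) :
    ∃ ρ₀ > (0 : ℝ), 3 * C₃ * ρ₀ ^ 3 < 1 / 100 ∧
      ∀ (Ω : Type u) [MeasureSpace Ω], IsProbabilityMeasure (ℙ : Measure Ω) →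
      ∀ X : Ω → ℝ, Measurable X → Integrable (fun ω => |X ω| ^ 3) ℙ →
        (∫ ω, X ω) = 0 → variance X ℙ = 1 → (∫ ω, |X ω| ^ 3) < C₃ →
        ∀ t : ℝ, 0 < |t| → |t| ≤ ρ₀ →
          ‖charFun' X t * Complex.exp ((t ^ 2 / 2 : ℝ) : ℂ) - 1‖ ≤ 1 / 100 ∧
          charFun' X t ≠ 0 ∧
          ‖Complex.log (charFun' X t * Complex.exp ((t ^ 2 / 2 : ℝ) : ℂ))‖
            ≤ 3 * C₃ * |t| ^ 3 := by
  obtain ⟨ρ₀, hρ₀, hρ₀_one, hρ₀_C₃, hC₃ρ₀⟩ := exists_pos_le_one_le_and_mul_pow_three_le hC₃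
  refine ⟨ρ₀, hρ₀, by linarith, fun Ω _ _ X hX h3 h0 h1 hC t _ htρ => ?_⟩
  have ht_sq : t ^ 2 / 2 ≤ 1 / 2 := by nlinarith [sq_abs t, abs_nonneg t]
  have hquartic : (t ^ 2 / 2) ^ 2 ≤ C₃ * |t| ^ 3 / 4 := by
    rw [← sq_abs t]
    nlinarith [pow_nonneg (abs_nonneg t) 3]
  have hsmall : C₃ * |t| ^ 3 ≤ 1 / 600 := hC₃ρ₀.trans' (by gcongr)
  set z := charFun' X t * exp ((t ^ 2 / 2 : ℝ) : ℂ)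
  have hz : ‖z - 1‖ ≤ 5 / 6 * (C₃ * |t| ^ 3) := calc
    ‖z - 1‖ ≤ 2 * (‖charFun' X t - ((1 - t ^ 2 / 2 : ℝ) : ℂ)‖ + (t ^ 2 / 2) ^ 2) :=
      norm_mul_cexp_sub_one_le (by positivity) ht_sq
    _ ≤ 2 * (|t| ^ 3 / 6 * C₃ + C₃ * |t| ^ 3 / 4) := by
      gcongr
      exact (norm_charFun'_sub_one_sub_sq_div_two_le hX h3 h0 h1 t).trans (by gcongr)
    _ = 5 / 6 * (C₃ * |t| ^ 3) := by ring
  have hz_small : ‖z - 1‖ ≤ 1 / 100 := by linarith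
  refine ⟨hz_small, fun hφ => ?_, ?_⟩
  · norm_num [z, hφ] at hz_small
  · have := norm_log_one_add_half_le_self (z := z - 1) (by linarith)
    rw [add_sub_cancel] at this
    linarith [mul_nonneg hC₃.le (pow_nonneg (abs_nonneg t) 3)]
end

section
/- Let C > 1 and set L = √((C+1)/C) and λ = √(C/(C+1)), so λ = 1/L < 1 < L. Let ξ and ξ' be independent real random variables with finite positive variances satisfying C⁻¹ < Var(ξ)/Var(ξ') < C, let η, η' be their standardizations and η'' the standardization of ξ + ξ', and set c = √(Var ξ/(Var ξ + Var ξ')), c' = √(Var ξ'/(Var ξ + Var ξ')). Suppose ρ > 0, N, N' ≥ 0, and f, f' : ℝ → ℂ are continuous functions with f(0) = f'(0) = 0 such that for all |t| ≤ ρ one has exp(f(t)) = φ_η(t)·e^{t²/2}, exp(f'(t)) = φ_{η'}(t)·e^{t²/2}, |f(t)| ≤ N·|t|³, and |f'(t)| ≤ N'·|t|³. Then the function g(t) = f(c·t) + f'(c'·t) is continuous, satisfies g(0) = 0, and for all |t| ≤ L·ρ one has exp(g(t)) = φ_{η''}(t)·e^{t²/2} and |g(t)| ≤ λ·max(N, N')·|t|³.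 -/
open MeasureTheory ProbabilityTheory Filter Topology

universe u

/-!
Write `V, V'` for the variances. Since `Var(ξ + ξ') = V + V'`, the standardized sum is
`η'' = c η + c' η'` with `c² + c'² = 1`, so `φ_{η''}(t) = φ_η(c t) φ_{η'}(c' t)` and the
Gaussian factors recombine: `e^{(ct)²/2} e^{(c't)²/2} = e^{t²/2}`. The ratio bound gives
`c, c' ≤ λ`, so for `|t| ≤ L ρ` both `|c t|` and `|c' t|` are at most `λ L ρ = ρ`, and
`N c³ + N' c'³ ≤ max(N, N') · λ (c² + c'²) = λ max(N, N')`.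
-/

namespace ProbabilityTheory

variable {Ω : Type*} [MeasureSpace Ω]

lemma charFun'_eq_charFun_map {X : Ω → ℝ} (hX : AEMeasurable X) (t : ℝ) :
    charFun' X t = charFun ((ℙ : Measure Ω).map X) t := by
  rw [charFun_apply_real, integral_map hX (by fun_prop)]
  simp only [charFun', Complex.ofReal_mul, mul_comm Complex.I]

lemma charFun'_const_mul (a : ℝ) (X : Ω → ℝ) (t : ℝ) :
    charFun' (fun ω => a * X ω) t = charFun' X (a * t) := by
  simp only [charFun', mul_comm a, mul_assoc]

lemma IndepFun.charFun'_add [IsFiniteMeasure (ℙ : Measure Ω)] {X Y : Ω → ℝ}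
    (hX : AEMeasurable X) (hY : AEMeasurable Y) (hXY : IndepFun X Y ℙ) (t : ℝ) :
    charFun' (fun ω => X ω + Y ω) t = charFun' X t * charFun' Y t := by
  rw [charFun'_eq_charFun_map (X := fun ω => X ω + Y ω) (hX.add hY), charFun'_eq_charFun_map hX,
    charFun'_eq_charFun_map hY, hXY.charFun_map_fun_add_eq_mul hX hY, Pi.mul_apply]

lemma IndepFun.stdize_add [IsFiniteMeasure (ℙ : Measure Ω)] {X Y : Ω → ℝ}
    (hX : MemLp X 2) (hY : MemLp Y 2) (hvX : 0 < variance X ℙ) (hvY : 0 < variance Y ℙ)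
    (hXY : IndepFun X Y ℙ) :
    stdize (fun ω => X ω + Y ω) = fun ω =>
      Real.sqrt (variance X ℙ / (variance X ℙ + variance Y ℙ)) * stdize X ω +
        Real.sqrt (variance Y ℙ / (variance X ℙ + variance Y ℙ)) * stdize Y ω := by
  have hsX : Real.sqrt (variance X ℙ) ≠ 0 := (Real.sqrt_pos.2 hvX).ne'
  have hsY : Real.sqrt (variance Y ℙ) ≠ 0 := (Real.sqrt_pos.2 hvY).ne'
  have hsXY : Real.sqrt (variance X ℙ + variance Y ℙ) ≠ 0 :=
    (Real.sqrt_pos.2 (by positivity)).ne'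
  have hV : variance (fun ω => X ω + Y ω) ℙ = variance X ℙ + variance Y ℙ :=
    hXY.variance_add hX hY
  funext ω
  simp only [stdize]
  rw [hV, integral_add (hX.integrable one_le_two) (hY.integrable one_le_two),
    Real.sqrt_div hvX.le, Real.sqrt_div hvY.le]
  field_simp
  ring

theorem IndepFun.charFun'_stdize_add [IsFiniteMeasure (ℙ : Measure Ω)]
    {X Y : Ω → ℝ} (hX : MemLp X 2) (hY : MemLp Y 2)
    (hvX : 0 < variance X ℙ) (hvY : 0 < variance Y ℙ) (hXY : IndepFun X Y ℙ) (t : ℝ) :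
    charFun' (stdize (fun ω => X ω + Y ω)) t =
      charFun' (stdize X) (Real.sqrt (variance X ℙ / (variance X ℙ + variance Y ℙ)) * t) *
        charFun' (stdize Y)
          (Real.sqrt (variance Y ℙ / (variance X ℙ + variance Y ℙ)) * t) := by
  set c := Real.sqrt (variance X ℙ / (variance X ℙ + variance Y ℙ))
  set c' := Real.sqrt (variance Y ℙ / (variance X ℙ + variance Y ℙ))
  have hmX : AEMeasurable (fun ω => c * stdize X ω) :=
    ((hX.aemeasurable.sub_const _).div_const _).const_mul _
  have hmY : AEMeasurable (fun ω => c' * stdize Y ω) :=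
    ((hY.aemeasurable.sub_const _).div_const _).const_mul _
  have hind : IndepFun (fun ω => c * stdize X ω) (fun ω => c' * stdize Y ω) ℙ :=
    hXY.comp (φ := fun x => c * ((x - ∫ ω, X ω) / Real.sqrt (variance X ℙ)))
      (ψ := fun y => c' * ((y - ∫ ω, Y ω) / Real.sqrt (variance Y ℙ)))
      (by fun_prop) (by fun_prop)
  rw [hXY.stdize_add hX hY hvX hvY, hind.charFun'_add hmX hmY, charFun'_const_mul,
    charFun'_const_mul]

end ProbabilityTheory

def IsCubicLogRemainder (φ f : ℝ → ℂ) (ρ N : ℝ) : Prop :=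
  ∀ t : ℝ, |t| ≤ ρ →
    Complex.exp (f t) = φ t * Complex.exp ((t ^ 2 / 2 : ℝ) : ℂ) ∧ ‖f t‖ ≤ N * |t| ^ 3

lemma mul_cube_add_mul_cube_le {c c' lam N N' : ℝ} (hc : 0 ≤ c) (hc' : 0 ≤ c')
    (hsum : c ^ 2 + c' ^ 2 = 1) (hcl : c ≤ lam) (hc'l : c' ≤ lam) (hM : 0 ≤ max N N') :
    N * c ^ 3 + N' * c' ^ 3 ≤ lam * max N N' :=
  calc N * c ^ 3 + N' * c' ^ 3 ≤ max N N' * (c * c ^ 2) + max N N' * (c' * c' ^ 2) := by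
        rw [← pow_succ', ← pow_succ']
        gcongr
        exacts [le_max_left _ _, le_max_right _ _]
    _ ≤ max N N' * (lam * c ^ 2) + max N N' * (lam * c' ^ 2) := by gcongr
    _ = lam * max N N' := by linear_combination lam * max N N' * hsum

theorem IsCubicLogRemainder.comp_mul_add {φ φ' f f' : ℝ → ℂ} {ρ N N' c c' lam R : ℝ}
    (hf : IsCubicLogRemainder φ f ρ N) (hf' : IsCubicLogRemainder φ' f' ρ N')
    (hM : 0 ≤ max N N') (hc : 0 ≤ c) (hc' : 0 ≤ c') (hsum : c ^ 2 + c' ^ 2 = 1)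
    (hcl : c ≤ lam) (hc'l : c' ≤ lam) (hR : lam * R ≤ ρ) :
    IsCubicLogRemainder (fun t => φ (c * t) * φ' (c' * t)) (fun t => f (c * t) + f' (c' * t))
      R (lam * max N N') := by
  intro t ht
  have hlam : 0 ≤ lam := hc.trans hcl
  have hmul {a : ℝ} (ha : 0 ≤ a) (hal : a ≤ lam) : |a * t| ≤ ρ := by
    rw [abs_mul, abs_of_nonneg ha]
    exact (mul_le_mul hal ht (abs_nonneg t) hlam).trans hR
  obtain ⟨hexp, hbd⟩ := hf _ (hmul hc hcl)
  obtain ⟨hexp', hbd'⟩ := hf' _ (hmul hc' hc'l)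
  have hgauss : (c * t) ^ 2 / 2 + (c' * t) ^ 2 / 2 = t ^ 2 / 2 := by
    linear_combination t ^ 2 / 2 * hsum
  constructor
  · rw [Complex.exp_add, hexp, hexp', mul_mul_mul_comm, ← Complex.exp_add,
      ← Complex.ofReal_add, hgauss]
  · calc ‖f (c * t) + f' (c' * t)‖ ≤ N * |c * t| ^ 3 + N' * |c' * t| ^ 3 :=
          (norm_add_le _ _).trans (add_le_add hbd hbd')
      _ = (N * c ^ 3 + N' * c' ^ 3) * |t| ^ 3 := by
          rw [abs_mul, abs_mul, abs_of_nonneg hc, abs_of_nonneg hc']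
          ring
      _ ≤ lam * max N N' * |t| ^ 3 := by
          gcongr
          exact mul_cube_add_mul_cube_le hc hc' hsum hcl hc'l hM

lemma sq_sqrt_div_add_add_sq_sqrt_div_add {v v' : ℝ} (hv : 0 ≤ v) (hv' : 0 ≤ v')
    (hpos : 0 < v + v') :
    Real.sqrt (v / (v + v')) ^ 2 + Real.sqrt (v' / (v + v')) ^ 2 = 1 := by
  rw [Real.sq_sqrt (by positivity), Real.sq_sqrt (by positivity), ← add_div, div_self hpos.ne']

lemma sqrt_div_add_le_of_div_le {v v' C : ℝ} (hv : 0 ≤ v) (hv' : 0 < v') (h : v / v' ≤ C) :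
    Real.sqrt (v / (v + v')) ≤ Real.sqrt (C / (C + 1)) := by
  have hC : 0 ≤ C := (div_nonneg hv hv'.le).trans h
  apply Real.sqrt_le_sqrt
  rw [div_le_div_iff₀ (by positivity) (by positivity)]
  nlinarith [(div_le_iff₀ hv').1 h]

lemma sqrt_div_add_one_mul_sqrt_add_one_div {C : ℝ} (hC : 0 < C) :
    Real.sqrt (C / (C + 1)) * Real.sqrt ((C + 1) / C) = 1 := by
  rw [← Real.sqrt_mul (by positivity), div_mul_div_cancel₀' hC.ne', div_self (by positivity),
    Real.sqrt_one]

theorem nonGaussianity_contraction_general {Ω : Type u} [MeasureSpace Ω]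
    [IsProbabilityMeasure (ℙ : Measure Ω)]
    (C : ℝ)
    (L lam : ℝ) (hL : L = Real.sqrt ((C + 1) / C)) (hlam : lam = Real.sqrt (C / (C + 1)))
    (ξ ξ' : Ω → ℝ)
    (h2ξ : MemLp ξ 2 ℙ) (h2ξ' : MemLp ξ' 2 ℙ)
    (hvξ : 0 < variance ξ ℙ) (hvξ' : 0 < variance ξ' ℙ)
    (hInd : IndepFun ξ ξ' ℙ)
    (hratio₁ : C⁻¹ < variance ξ ℙ / variance ξ' ℙ)
    (hratio₂ : variance ξ ℙ / variance ξ' ℙ < C)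
    (c c' : ℝ)
    (hc : c = Real.sqrt (variance ξ ℙ / (variance ξ ℙ + variance ξ' ℙ)))
    (hc' : c' = Real.sqrt (variance ξ' ℙ / (variance ξ ℙ + variance ξ' ℙ)))
    (ρ N N' : ℝ) (hN : 0 ≤ N)
    (f f' : ℝ → ℂ) (hfc : Continuous f) (hf'c : Continuous f')
    (hf0 : f 0 = 0) (hf'0 : f' 0 = 0)
    (hfe : ∀ t : ℝ, |t| ≤ ρ →
      Complex.exp (f t) = charFun' (stdize ξ) t * Complex.exp ((t ^ 2 / 2 : ℝ) : ℂ))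
    (hfb : ∀ t : ℝ, |t| ≤ ρ → ‖f t‖ ≤ N * |t| ^ 3)
    (hf'e : ∀ t : ℝ, |t| ≤ ρ →
      Complex.exp (f' t) = charFun' (stdize ξ') t * Complex.exp ((t ^ 2 / 2 : ℝ) : ℂ))
    (hf'b : ∀ t : ℝ, |t| ≤ ρ → ‖f' t‖ ≤ N' * |t| ^ 3) :
    Continuous (fun t : ℝ => f (c * t) + f' (c' * t)) ∧
    f (c * 0) + f' (c' * 0) = 0 ∧
    ∀ t : ℝ, |t| ≤ L * ρ →
      Complex.exp (f (c * t) + f' (c' * t))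
        = charFun' (stdize (fun ω => ξ ω + ξ' ω)) t * Complex.exp ((t ^ 2 / 2 : ℝ) : ℂ) ∧
      ‖f (c * t) + f' (c' * t)‖ ≤ lam * max N N' * |t| ^ 3 := by
  subst hL hlam hc hc'
  have hC : 0 < C := (div_pos hvξ hvξ').trans hratio₂
  have hratio₁' : variance ξ' ℙ / variance ξ ℙ ≤ C := by
    rw [← inv_div]
    exact ((inv_lt_comm₀ hC (div_pos hvξ hvξ')).1 hratio₁).le
  have hrem := IsCubicLogRemainder.comp_mul_add (fun t ht => ⟨hfe t ht, hfb t ht⟩)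
    (fun t ht => ⟨hf'e t ht, hf'b t ht⟩) (le_max_of_le_left hN) (Real.sqrt_nonneg _)
    (Real.sqrt_nonneg _) (sq_sqrt_div_add_add_sq_sqrt_div_add hvξ.le hvξ'.le (by positivity))
    (sqrt_div_add_le_of_div_le hvξ.le hvξ' hratio₂.le)
    (add_comm (variance ξ ℙ) _ ▸ sqrt_div_add_le_of_div_le hvξ'.le hvξ hratio₁')
    (by rw [← mul_assoc, sqrt_div_add_one_mul_sqrt_add_one_div hC, one_mul])
  refine ⟨by fun_prop, by simp [hf0, hf'0], fun t ht => ?_⟩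
  rw [hInd.charFun'_stdize_add h2ξ h2ξ' hvξ hvξ']
  exact hrem t ht

/-- **Contraction of the non-Gaussianity bound for a sum of two independent variables.** -/
theorem nonGaussianity_contraction {Ω : Type u} [MeasureSpace Ω]
    [IsProbabilityMeasure (ℙ : Measure Ω)]
    (C : ℝ) (hC : 1 < C)
    (L lam : ℝ) (hL : L = Real.sqrt ((C + 1) / C)) (hlam : lam = Real.sqrt (C / (C + 1)))
    (ξ ξ' : Ω → ℝ) (hmξ : Measurable ξ) (hmξ' : Measurable ξ')
    (h2ξ : MemLp ξ 2 ℙ) (h2ξ' : MemLp ξ' 2 ℙ)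
    (hvξ : 0 < variance ξ ℙ) (hvξ' : 0 < variance ξ' ℙ)
    (hInd : IndepFun ξ ξ' ℙ)
    (hratio₁ : C⁻¹ < variance ξ ℙ / variance ξ' ℙ)
    (hratio₂ : variance ξ ℙ / variance ξ' ℙ < C)
    (c c' : ℝ)
    (hc : c = Real.sqrt (variance ξ ℙ / (variance ξ ℙ + variance ξ' ℙ)))
    (hc' : c' = Real.sqrt (variance ξ' ℙ / (variance ξ ℙ + variance ξ' ℙ)))
    (ρ N N' : ℝ) (hρ : 0 < ρ) (hN : 0 ≤ N) (hN' : 0 ≤ N')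
    (f f' : ℝ → ℂ) (hfc : Continuous f) (hf'c : Continuous f')
    (hf0 : f 0 = 0) (hf'0 : f' 0 = 0)
    (hfe : ∀ t : ℝ, |t| ≤ ρ →
      Complex.exp (f t) = charFun' (stdize ξ) t * Complex.exp ((t ^ 2 / 2 : ℝ) : ℂ))
    (hfb : ∀ t : ℝ, |t| ≤ ρ → ‖f t‖ ≤ N * |t| ^ 3)
    (hf'e : ∀ t : ℝ, |t| ≤ ρ →
      Complex.exp (f' t) = charFun' (stdize ξ') t * Complex.exp ((t ^ 2 / 2 : ℝ) : ℂ))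
    (hf'b : ∀ t : ℝ, |t| ≤ ρ → ‖f' t‖ ≤ N' * |t| ^ 3) :
    Continuous (fun t : ℝ => f (c * t) + f' (c' * t)) ∧
    f (c * 0) + f' (c' * 0) = 0 ∧
    ∀ t : ℝ, |t| ≤ L * ρ →
      Complex.exp (f (c * t) + f' (c' * t))
        = charFun' (stdize (fun ω => ξ ω + ξ' ω)) t * Complex.exp ((t ^ 2 / 2 : ℝ) : ℂ) ∧
      ‖f (c * t) + f' (c' * t)‖ ≤ lam * max N N' * |t| ^ 3 :=
  nonGaussianity_contraction_general C L lam hL hlam ξ ξ' h2ξ h2ξ' hvξ hvξ' hInd hratio₁ hratio₂ c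
    c' hc hc' ρ N N' hN f f' hfc hf'c hf0 hf'0 hfe hfb hf'e hf'b
end

section
/- Let X and Y be real random variables on the same probability space with E[X] = E[Y] = 0, Var(X) = Var(Y) = 1, E|X|³ ≤ C_X, E|Y|³ ≤ C_X, and E|Y − X|³ ≤ C_r for constants C_X, C_r < ∞. Then for every t ∈ ℝ one has |φ_X(t) − φ_Y(t)| ≤ C_r^{1/3}·C_X^{2/3}·|t|³. -/
/-!
Let `ψ(u) = e^{iu} - 1 - iu + u²/2` be the second-order Taylor remainder of `u ↦ e^{iu}`.
Since `X` and `Y` have the same first two moments, `φ_X(t) - φ_Y(t) = E[ψ(tX) - ψ(tY)]`.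
As `|ψ'(u)| = |e^{iu} - 1 - iu| ≤ u²/2`, the mean value inequality gives
`|ψ(a) - ψ(b)| ≤ (a² + b²)/2 · |a - b|`, hence
`|φ_X(t) - φ_Y(t)| ≤ |t|³/2 · (E[|Y - X| X²] + E[|Y - X| Y²])`, and Hölder's inequality with
exponents `3` and `3/2` bounds `E[|Y - X| Z²]` by `(E|Y - X|³)^{1/3} (E|Z|³)^{2/3}`.
-/

open MeasureTheory ProbabilityTheory Filter Topology

universe u

open Complex

lemma hasDerivAt_cexp_I_mul_sub_one_sub (s : ℝ) :
    HasDerivAt (fun u : ℝ => exp (I * u) - 1 - I * u) (I * (exp (I * s) - 1)) s := by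
  have h : HasDerivAt (fun u : ℝ => I * (u : ℂ)) I s := by
    simpa using (hasDerivAt_id s).ofReal_comp.const_mul I
  exact ((h.cexp.sub_const 1).sub h).congr_deriv (by ring)

lemma norm_cexp_I_mul_sub_one_sub_le (u : ℝ) : ‖exp (I * u) - 1 - I * u‖ ≤ u ^ 2 / 2 := by
  wlog hu : 0 ≤ u generalizing u
  · have h := this (-u) (by linarith)
    rwa [← norm_conj, map_sub, map_sub, map_mul, ← exp_conj, map_mul,
      conj_I, conj_ofReal, map_one, neg_sq, neg_mul, ← mul_neg,
      ← ofReal_neg, neg_neg] at h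
  refine image_norm_le_of_norm_deriv_right_le_deriv_boundary (a := 0) (b := u)
    (B := fun s => s ^ 2 / 2) (B' := id) (Continuous.continuousOn (by fun_prop))
    (fun s _ => (hasDerivAt_cexp_I_mul_sub_one_sub s).hasDerivWithinAt) (by simp)
    (fun s => by simpa using (hasDerivAt_pow 2 s).div_const 2) ?_ ⟨hu, le_rfl⟩
  intro s hs
  rw [norm_mul, norm_I, one_mul]
  exact Real.norm_exp_I_mul_ofReal_sub_one_le.trans_eq (Real.norm_of_nonneg hs.1)

noncomputable def expIRemainder (u : ℝ) : ℂ := exp (I * u) - 1 - I * u + (u : ℂ) ^ 2 / 2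

lemma hasDerivAt_expIRemainder (s : ℝ) :
    HasDerivAt expIRemainder (I * (exp (I * s) - 1 - I * s)) s := by
  have h : HasDerivAt (fun u : ℝ => (u : ℂ) ^ 2 / 2) (s : ℂ) s := by
    simpa using ((hasDerivAt_id s).ofReal_comp.pow 2).div_const 2
  refine ((hasDerivAt_cexp_I_mul_sub_one_sub s).add h).congr_deriv ?_
  ring_nf
  rw [I_sq]
  ring

lemma norm_expIRemainder_le (u : ℝ) : ‖expIRemainder u‖ ≤ u ^ 2 := by
  calc ‖expIRemainder u‖ ≤ ‖exp (I * u) - 1 - I * u‖ + ‖(u : ℂ) ^ 2 / 2‖ := norm_add_le _ _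
    _ ≤ u ^ 2 / 2 + u ^ 2 / 2 := by
      gcongr
      · exact norm_cexp_I_mul_sub_one_sub_le u
      · simp
    _ = u ^ 2 := by ring

lemma norm_expIRemainder_sub_le (a b : ℝ) :
    ‖expIRemainder a - expIRemainder b‖ ≤ (a ^ 2 + b ^ 2) / 2 * |a - b| := by
  have hderiv_le :
      ∀ s ∈ Set.uIcc b a, ‖I * (exp (I * s) - 1 - I * s)‖ ≤ (a ^ 2 + b ^ 2) / 2 := by
    intro s hs
    rw [norm_mul, norm_I, one_mul]
    refine (norm_cexp_I_mul_sub_one_sub_le s).trans ?_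
    rw [Set.mem_uIcc] at hs
    rcases hs with ⟨h1, h2⟩ | ⟨h1, h2⟩ <;>
      nlinarith [mul_nonneg (sub_nonneg.2 h1) (sub_nonneg.2 h2), sq_nonneg (a + b),
        sq_nonneg (a - b)]
  simpa [Real.norm_eq_abs] using (convex_uIcc b a).norm_image_sub_le_of_norm_hasDerivWithin_le
    (fun s _ => (hasDerivAt_expIRemainder s).hasDerivWithinAt) hderiv_le
    Set.left_mem_uIcc Set.right_mem_uIcc

section Moments

variable {α : Type*} [MeasurableSpace α] {μ : Measure α}

lemma memLp_of_integrable_norm_pow {E : Type*} [NormedAddCommGroup E] {f : α → E} {p : ℕ}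
    (hp : p ≠ 0) (hf : AEStronglyMeasurable f μ) (h : Integrable (fun x => ‖f x‖ ^ p) μ) :
    MemLp f p μ :=
  (integrable_norm_rpow_iff hf (by simpa) (by simp)).1 (by simpa using h)

lemma integrable_abs_mul_sq {D Z : α → ℝ} (hD : MemLp D 3 μ) (hZ : MemLp Z 3 μ) :
    Integrable (fun x => |D x| * Z x ^ 2) μ := by
  refine ((hD.integrable_norm_pow three_ne_zero).add (hZ.integrable_norm_pow three_ne_zero)).mono'
    (hD.1.norm.mul (hZ.1.pow 2)) (Eventually.of_forall fun x => ?_)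
  have ha := abs_nonneg (D x)
  have hb := abs_nonneg (Z x)
  simp only [Real.norm_eq_abs, Pi.add_apply, ← sq_abs (Z x)]
  rw [abs_of_nonneg (by positivity)]
  nlinarith [mul_nonneg (add_nonneg ha hb) (sq_nonneg (|D x| - |Z x|)),
    mul_nonneg (sq_nonneg (|D x|)) hb]

lemma integral_abs_mul_sq_le {D Z : α → ℝ} (hD : MemLp D 3 μ) (hZ : MemLp Z 3 μ) :
    ∫ x, |D x| * Z x ^ 2 ∂μ ≤
      (∫ x, |D x| ^ 3 ∂μ) ^ (1 / 3 : ℝ) * (∫ x, |Z x| ^ 3 ∂μ) ^ (2 / 3 : ℝ) := by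
  have hD' : MemLp (fun x => |D x|) (ENNReal.ofReal 3) μ := by
    rw [ENNReal.ofReal_ofNat]; exact hD.abs
  have hZ' : MemLp (fun x => Z x ^ 2) (ENNReal.ofReal (3 / 2)) μ := by
    convert hZ.norm_rpow_div 2 using 1
    · ext x; simp
    · rw [ENNReal.ofReal_div_of_pos two_pos]; simp
  have H := integral_mul_le_Lp_mul_Lq_of_nonneg
    (Real.holderConjugate_iff.mpr ⟨by norm_num, by norm_num⟩)
    (Eventually.of_forall fun x => abs_nonneg (D x))
    (Eventually.of_forall fun x => sq_nonneg (Z x)) hD' hZ'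
  have hpow : ∀ x, (Z x ^ 2) ^ (3 / 2 : ℝ) = |Z x| ^ 3 := fun x => by
    rw [← sq_abs, ← Real.rpow_natCast, ← Real.rpow_mul (abs_nonneg _)]; norm_num
  simp only [hpow, Real.rpow_ofNat] at H
  convert H using 3
  norm_num

lemma integrable_expIRemainder_comp {Z : α → ℝ} (hZ : MemLp Z 2 μ) (t : ℝ) :
    Integrable (fun x => expIRemainder (t * Z x)) μ := by
  refine (hZ.integrable_sq.const_mul (t ^ 2)).mono' ?_ (Eventually.of_forall fun x => ?_)
  · unfold expIRemainder
    have := hZ.1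
    fun_prop
  · simpa [mul_pow] using norm_expIRemainder_le (t * Z x)

end Moments

section CharFun

variable {Ω : Type u} [MeasureSpace Ω] [IsProbabilityMeasure (ℙ : Measure Ω)]

lemma integral_expIRemainder_comp {Z : Ω → ℝ} (hZ : MemLp Z 2 ℙ) (t : ℝ) :
    ∫ ω, expIRemainder (t * Z ω) =
      charFun' Z t - 1 - I * t * (∫ ω, Z ω : ℝ) + t ^ 2 / 2 * (∫ ω, Z ω ^ 2 : ℝ) := by
  have hexp : Integrable (fun ω => exp (I * ((t * Z ω : ℝ) : ℂ))) ℙ := by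
    refine Integrable.of_bound (by have := hZ.1; fun_prop) 1 (Eventually.of_forall fun ω => ?_)
    rw [norm_exp_I_mul_ofReal]
  have hlin : Integrable (fun ω => I * ((t * Z ω : ℝ) : ℂ)) ℙ :=
    (((hZ.integrable one_le_two).const_mul t).ofReal).const_mul I
  have hsq : Integrable (fun ω => ((t * Z ω : ℝ) : ℂ) ^ 2 / 2) ℙ := by
    have hsq' : Integrable (fun ω => ((Z ω ^ 2 : ℝ) : ℂ)) ℙ := hZ.integrable_sq.ofReal
    refine (hsq'.const_mul ((t : ℂ) ^ 2 / 2)).congr (Eventually.of_forall fun ω => ?_)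
    push_cast
    ring
  have hexp₁ : Integrable (fun ω => exp (I * ((t * Z ω : ℝ) : ℂ)) - 1) ℙ :=
    hexp.sub (integrable_const 1)
  have hexp₂ :
      Integrable (fun ω => exp (I * ((t * Z ω : ℝ) : ℂ)) - 1 - I * ((t * Z ω : ℝ) : ℂ)) ℙ :=
    hexp₁.sub hlin
  unfold expIRemainder charFun'
  rw [integral_add hexp₂ hsq, integral_sub hexp₁ hlin, integral_sub hexp (integrable_const 1)]
  simp only [integral_const, probReal_univ, one_smul, Complex.ofReal_mul, mul_pow,
    ← Complex.ofReal_pow, integral_const_mul, integral_div, integral_complex_ofReal]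
  push_cast
  ring

lemma norm_charFun'_sub_le {X Y : Ω → ℝ} (hX : MemLp X 3 ℙ) (hY : MemLp Y 3 ℙ)
    (hmean : ∫ ω, X ω = ∫ ω, Y ω) (hsq : ∫ ω, X ω ^ 2 = ∫ ω, Y ω ^ 2) (t : ℝ) :
    ‖charFun' X t - charFun' Y t‖ ≤
      |t| ^ 3 / 2 * ((∫ ω, |Y ω - X ω| * X ω ^ 2) + ∫ ω, |Y ω - X ω| * Y ω ^ 2) := by
  have hX2 : MemLp X 2 ℙ := hX.mono_exponent (by norm_num)
  have hY2 : MemLp Y 2 ℙ := hY.mono_exponent (by norm_num)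
  have hD : MemLp (fun ω => Y ω - X ω) 3 ℙ := hY.sub hX
  have hdiff : charFun' X t - charFun' Y t =
      ∫ ω, (expIRemainder (t * X ω) - expIRemainder (t * Y ω)) := by
    rw [integral_sub (integrable_expIRemainder_comp hX2 t) (integrable_expIRemainder_comp hY2 t),
      integral_expIRemainder_comp hX2, integral_expIRemainder_comp hY2, hmean, hsq]
    ring
  have hpointwise : ∀ ω, ‖expIRemainder (t * X ω) - expIRemainder (t * Y ω)‖ ≤
      |t| ^ 3 / 2 * (|Y ω - X ω| * X ω ^ 2 + |Y ω - X ω| * Y ω ^ 2) := fun ω => by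
    refine (norm_expIRemainder_sub_le _ _).trans_eq ?_
    rw [← mul_sub, abs_mul, abs_sub_comm, mul_pow, mul_pow, ← sq_abs t]
    ring
  rw [hdiff, ← integral_add (integrable_abs_mul_sq hD hX) (integrable_abs_mul_sq hD hY),
    ← integral_const_mul]
  exact (norm_integral_le_integral_norm _).trans <| integral_mono_of_nonneg
    (Eventually.of_forall fun _ => norm_nonneg _)
    (((integrable_abs_mul_sq hD hX).add (integrable_abs_mul_sq hD hY)).const_mul _)
    (Eventually.of_forall hpointwise)

end CharFun

theorem charFun_perturbation_general {Ω : Type u} [MeasureSpace Ω]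
    [IsProbabilityMeasure (ℙ : Measure Ω)]
    (X Y : Ω → ℝ) (hXm : Measurable X) (hYm : Measurable Y)
    (hX3 : Integrable (fun ω => |X ω| ^ 3) ℙ)
    (hY3 : Integrable (fun ω => |Y ω| ^ 3) ℙ)
    (hmX : (∫ ω, X ω) = 0) (hmY : (∫ ω, Y ω) = 0)
    (hvX : variance X ℙ = 1) (hvY : variance Y ℙ = 1)
    (CX Cr : ℝ)
    (h3X : (∫ ω, |X ω| ^ 3) ≤ CX) (h3Y : (∫ ω, |Y ω| ^ 3) ≤ CX)
    (h3r : (∫ ω, |Y ω - X ω| ^ 3) ≤ Cr) :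
    ∀ t : ℝ, ‖charFun' X t - charFun' Y t‖
      ≤ Cr ^ ((1 : ℝ) / 3) * CX ^ ((2 : ℝ) / 3) * |t| ^ 3 := by
  intro t
  set K := Cr ^ ((1 : ℝ) / 3) * CX ^ ((2 : ℝ) / 3)
  have hX : MemLp X 3 ℙ :=
    memLp_of_integrable_norm_pow three_ne_zero hXm.aestronglyMeasurable hX3
  have hY : MemLp Y 3 ℙ :=
    memLp_of_integrable_norm_pow three_ne_zero hYm.aestronglyMeasurable hY3
  have hX2 : ∫ ω, X ω ^ 2 = 1 :=
    (variance_of_integral_eq_zero hXm.aemeasurable hmX).symm.trans hvX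
  have hY2 : ∫ ω, Y ω ^ 2 = 1 :=
    (variance_of_integral_eq_zero hYm.aemeasurable hmY).symm.trans hvY
  have hholder : ∀ Z : Ω → ℝ, MemLp Z 3 ℙ → ∫ ω, |Z ω| ^ 3 ≤ CX →
      ∫ ω, |Y ω - X ω| * Z ω ^ 2 ≤ K := fun Z hZ hZCX =>
    (integral_abs_mul_sq_le (hY.sub hX) hZ).trans <| mul_le_mul
      (Real.rpow_le_rpow (integral_nonneg fun _ => by positivity) h3r (by norm_num))
      (Real.rpow_le_rpow (integral_nonneg fun _ => by positivity) hZCX (by norm_num))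
      (by positivity) (Real.rpow_nonneg ((integral_nonneg fun _ => by positivity).trans h3r) _)
  calc ‖charFun' X t - charFun' Y t‖
      ≤ |t| ^ 3 / 2 * ((∫ ω, |Y ω - X ω| * X ω ^ 2) + ∫ ω, |Y ω - X ω| * Y ω ^ 2) :=
        norm_charFun'_sub_le hX hY (hmX.trans hmY.symm) (hX2.trans hY2.symm) t
    _ ≤ |t| ^ 3 / 2 * (K + K) := by
        gcongr
        exacts [hholder X hX h3X, hholder Y hY h3Y]
    _ = K * |t| ^ 3 := by ring

/-- **Perturbation estimate for characteristic functions.** If `X, Y` are standardized with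
third moments bounded by `C_X` and `E|Y − X|³ ≤ C_r`, then
`|φ_X(t) − φ_Y(t)| ≤ C_r^{1/3}·C_X^{2/3}·|t|³`. -/
theorem charFun_perturbation {Ω : Type u} [MeasureSpace Ω]
    [IsProbabilityMeasure (ℙ : Measure Ω)]
    (X Y : Ω → ℝ) (hXm : Measurable X) (hYm : Measurable Y)
    (hX3 : Integrable (fun ω => |X ω| ^ 3) ℙ)
    (hY3 : Integrable (fun ω => |Y ω| ^ 3) ℙ)
    (hr3 : Integrable (fun ω => |Y ω - X ω| ^ 3) ℙ)
    (hmX : (∫ ω, X ω) = 0) (hmY : (∫ ω, Y ω) = 0)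
    (hvX : variance X ℙ = 1) (hvY : variance Y ℙ = 1)
    (CX Cr : ℝ)
    (h3X : (∫ ω, |X ω| ^ 3) ≤ CX) (h3Y : (∫ ω, |Y ω| ^ 3) ≤ CX)
    (h3r : (∫ ω, |Y ω - X ω| ^ 3) ≤ Cr) :
    ∀ t : ℝ, ‖charFun' X t - charFun' Y t‖
      ≤ Cr ^ ((1 : ℝ) / 3) * CX ^ ((2 : ℝ) / 3) * |t| ^ 3 :=
  charFun_perturbation_general X Y hXm hYm hX3 hY3 hmX hmY hvX hvY CX Cr h3X h3Y h3r
end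

section
/- Let X and Y be real random variables on the same probability space with E[X] = E[Y] = 0, Var(X) = Var(Y) = 1, E|X|³ ≤ C_X, E|Y|³ ≤ C_X, and E|Y − X|³ ≤ C_r, and set K_r = C_r^{1/3}·C_X^{2/3}. Suppose ρ > 0 and N ≥ 0 are such that for all 0 < |t| ≤ ρ one has φ_X(t) ≠ 0 and |Log(φ_X(t)·e^{t²/2})| ≤ N·|t|³, that ρ³·N ≤ 1/100, and that K_r·ρ³·e^{ρ²/2} ≤ 1/100. Then for all 0 < |t| ≤ ρ one has φ_Y(t) ≠ 0 and |Log(φ_Y(t)·e^{t²/2})| ≤ (N + 2·K_r·e^{ρ²/2})·|t|³. -/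
open MeasureTheory ProbabilityTheory Filter Topology

universe u

/-! Because `X` and `Y` have the same first two moments, `φ_Y(t) - φ_X(t) = E[R(tY) - R(tX)]`,
where `R(x) = e^{ix} - (1 + ix - x²/2)` is the second-order Taylor remainder. Since
`|R'(x)| = |e^{ix} - 1 - ix| ≤ x²/2`, the mean value inequality gives
`|R(tY) - R(tX)| ≤ |t|³ (X² + Y²) |Y - X| / 2`, and Hölder's inequality with exponents `3` and
`3/2` bounds `E[|Y - X| X²]` and `E[|Y - X| Y²]` by `K_r`, so `|φ_Y(t) - φ_X(t)| ≤ K_r |t|³`.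
After multiplying by `e^{t²/2} ≤ e^{ρ²/2}`, both `φ_X(t) e^{t²/2}` and `φ_Y(t) e^{t²/2}` lie
within `3/100` of `1`, where `Log` is `2`-Lipschitz. -/

open Complex ComplexConjugate
open scoped ENNReal

namespace Complex

lemma hasDerivAt_exp_I_mul_ofReal (u : ℝ) :
    HasDerivAt (fun v : ℝ => exp (I * v)) (I * exp (I * u)) u := by
  simpa [mul_comm] using ((hasDerivAt_id u).ofReal_comp.const_mul I).cexp

lemma norm_exp_I_mul_ofReal_sub_one_sub_le_of_nonneg {x : ℝ} (hx : 0 ≤ x) :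
    ‖exp (I * x) - 1 - I * x‖ ≤ x ^ 2 / 2 := by
  have hf (u : ℝ) : HasDerivAt (fun v : ℝ => exp (I * v) - 1 - I * v)
      (I * (exp (I * u) - 1)) u := by
    refine (((hasDerivAt_exp_I_mul_ofReal u).sub_const 1).sub
      ((hasDerivAt_id u).ofReal_comp.const_mul I)).congr_deriv ?_
    simp [mul_sub]
  refine image_norm_le_of_norm_deriv_right_le_deriv_boundary (a := 0) (B := fun u => u ^ 2 / 2)
    (B' := id) (fun u _ => (hf u).continuousAt.continuousWithinAt)
    (fun u _ => (hf u).hasDerivWithinAt) (by simp)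
    (fun u => by simpa using (hasDerivAt_pow 2 u).div_const 2) (fun u hu => ?_)
    (Set.right_mem_Icc.mpr hx)
  simpa [abs_of_nonneg hu.1] using Real.norm_exp_I_mul_ofReal_sub_one_le (x := u)

lemma norm_exp_I_mul_ofReal_sub_one_sub_le (x : ℝ) :
    ‖exp (I * x) - 1 - I * x‖ ≤ x ^ 2 / 2 := by
  rcases le_total 0 x with hx | hx
  · exact norm_exp_I_mul_ofReal_sub_one_sub_le_of_nonneg hx
  · have h := norm_exp_I_mul_ofReal_sub_one_sub_le_of_nonneg (neg_nonneg.mpr hx)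
    have hconj : exp (I * ↑(-x)) - 1 - I * ↑(-x) = conj (exp (I * x) - 1 - I * x) := by
      simp [← exp_conj]
    rwa [hconj, norm_conj, neg_sq] at h

noncomputable def expITaylorRemainder (x : ℝ) : ℂ :=
  exp (I * x) - (1 + I * x - ((x ^ 2 / 2 : ℝ) : ℂ))

lemma hasDerivAt_expITaylorRemainder (u : ℝ) :
    HasDerivAt expITaylorRemainder (I * (exp (I * u) - 1 - I * u)) u := by
  have hpoly : HasDerivAt (fun v : ℝ => 1 + I * v - ((v ^ 2 / 2 : ℝ) : ℂ)) (I - u) u := by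
    refine ((((hasDerivAt_id u).ofReal_comp.const_mul I).const_add 1).sub
      ((hasDerivAt_pow 2 u).div_const 2).ofReal_comp).congr_deriv ?_
    push_cast
    ring
  refine ((hasDerivAt_exp_I_mul_ofReal u).sub hpoly).congr_deriv ?_
  linear_combination (u : ℂ) * I_sq

lemma norm_expITaylorRemainder_sub_le (x y : ℝ) :
    ‖expITaylorRemainder y - expITaylorRemainder x‖ ≤ (x ^ 2 + y ^ 2) / 2 * |y - x| := by
  refine (Convex.norm_image_sub_le_of_norm_hasDerivWithin_le
    (fun u _ => (hasDerivAt_expITaylorRemainder u).hasDerivWithinAt) (fun u hu => ?_)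
    (convex_uIcc x y) Set.left_mem_uIcc Set.right_mem_uIcc).trans_eq (by rw [Real.norm_eq_abs])
  have hu2 : u ^ 2 ≤ x ^ 2 + y ^ 2 := by
    rcases Set.mem_uIcc.mp hu with ⟨h₁, h₂⟩ | ⟨h₁, h₂⟩ <;> rcases le_total 0 u with h₀ | h₀ <;>
      nlinarith
  calc ‖I * (exp (I * u) - 1 - I * u)‖ = ‖exp (I * u) - 1 - I * u‖ := by simp
    _ ≤ u ^ 2 / 2 := norm_exp_I_mul_ofReal_sub_one_sub_le u
    _ ≤ (x ^ 2 + y ^ 2) / 2 := by linarith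

lemma norm_log_sub_log_le {z w : ℂ} {r : ℝ} (hr : r < 1) (hz : ‖z - 1‖ ≤ r)
    (hw : ‖w - 1‖ ≤ r) : ‖log w - log z‖ ≤ (1 - r)⁻¹ * ‖w - z‖ := by
  refine Convex.norm_image_sub_le_of_norm_hasDerivWithin_le (f := log)
    (fun ζ hζ => (hasDerivAt_log (ball_one_subset_slitPlane ?_)).hasDerivWithinAt)
    (fun ζ hζ => ?_) (convex_closedBall 1 r) (mem_closedBall_iff_norm.mpr hz)
    (mem_closedBall_iff_norm.mpr hw)
  · exact Metric.closedBall_subset_ball hr hζ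
  · have h1 : 1 - r ≤ ‖ζ‖ := by
      have := norm_sub_norm_le (1 : ℂ) ζ
      rw [norm_one, norm_sub_rev] at this
      linarith [mem_closedBall_iff_norm.mp hζ]
    rw [norm_inv]
    exact inv_anti₀ (by linarith) h1

lemma norm_sub_one_le_of_norm_log_le {z : ℂ} (hz : z ≠ 0) (h : ‖log z‖ ≤ 1) :
    ‖z - 1‖ ≤ 2 * ‖log z‖ := by
  simpa [exp_log hz] using norm_exp_sub_one_le h

lemma ne_zero_and_norm_log_le_of_norm_sub_le {z w : ℂ} (hz : z ≠ 0) (hlog : ‖log z‖ ≤ 1 / 100)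
    (hwz : ‖w - z‖ ≤ 1 / 100) : w ≠ 0 ∧ ‖log w‖ ≤ ‖log z‖ + 2 * ‖w - z‖ := by
  have hz1 : ‖z - 1‖ ≤ 2 / 100 :=
    (norm_sub_one_le_of_norm_log_le hz (hlog.trans (by norm_num))).trans (by linarith)
  have hw1 : ‖w - 1‖ ≤ 3 / 100 := (norm_sub_le_norm_sub_add_norm_sub w z 1).trans (by linarith)
  refine ⟨fun hw => by norm_num [hw] at hw1, ?_⟩
  have hlip := norm_log_sub_log_le (by norm_num) (hz1.trans (by norm_num)) hw1
  calc ‖log w‖ ≤ ‖log z‖ + ‖log w - log z‖ := norm_le_norm_add_norm_sub' _ _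
    _ ≤ ‖log z‖ + 2 * ‖w - z‖ := by
      gcongr
      exact hlip.trans (mul_le_mul_of_nonneg_right (by norm_num) (norm_nonneg _))

end Complex

lemma integral_abs_mul_sq_le_s14 {α : Type*} [MeasurableSpace α] {μ : Measure α} {f g : α → ℝ}
    (hf : MemLp f 3 μ) (hg : MemLp g 3 μ) :
    ∫ x, |f x| * g x ^ 2 ∂μ ≤
      (∫ x, |f x| ^ 3 ∂μ) ^ (1 / 3 : ℝ) * (∫ x, |g x| ^ 3 ∂μ) ^ (2 / 3 : ℝ) := by
  have hg2 : MemLp (fun x => g x ^ 2) (ENNReal.ofReal (3 / 2)) μ := by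
    convert hg.norm_rpow_div 2 using 1
    · ext x; simp
    · rw [ENNReal.ofReal_div_of_pos (by norm_num)]; norm_num
  have hpq : (3 : ℝ).HolderConjugate (3 / 2) := ⟨by norm_num, by norm_num, by norm_num⟩
  have key := integral_mul_norm_le_Lp_mul_Lq hpq (by simpa using hf) hg2
  have hpow (x : α) : (g x ^ 2) ^ (3 / 2 : ℝ) = |g x| ^ 3 := by
    rw [← sq_abs, ← Real.rpow_natCast_mul (abs_nonneg _)]
    norm_num
  simp only [hpow, norm_pow, Real.norm_eq_abs, sq_abs, Real.rpow_ofNat] at key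
  convert key using 2
  norm_num

lemma memLp_of_integrable_abs_pow {α : Type*} [MeasurableSpace α] {μ : Measure α} {f : α → ℝ}
    {n : ℕ} (hn : n ≠ 0) (hf : AEStronglyMeasurable f μ)
    (h : Integrable (fun x => |f x| ^ n) μ) : MemLp f n μ := by
  rw [← integrable_norm_rpow_iff hf (by simpa) (by simp)]
  simpa using h

lemma integrable_abs_mul_sq_s14 {α : Type*} [MeasurableSpace α] {μ : Measure α} {f g : α → ℝ}
    (hf : MemLp f 3 μ) (hg : MemLp g 3 μ) : Integrable (fun x => |f x| * g x ^ 2) μ := by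
  refine ((hf.integrable_norm_pow (by norm_num)).add (hg.integrable_norm_pow (by norm_num))).mono'
    (hf.aestronglyMeasurable.norm.mul (hg.aestronglyMeasurable.pow 2)) (.of_forall fun x => ?_)
  rw [Real.norm_eq_abs, abs_mul, abs_abs, abs_of_nonneg (sq_nonneg (g x)), ← sq_abs (g x)]
  simp only [Pi.add_apply, Real.norm_eq_abs]
  rcases le_total |f x| |g x| with h | h <;>
    nlinarith [abs_nonneg (f x), abs_nonneg (g x), mul_le_mul_of_nonneg_right h (sq_nonneg |g x|),
      mul_le_mul_of_nonneg_left h (abs_nonneg (f x)), pow_le_pow_left₀ (abs_nonneg _) h 2]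

section CharFun

variable {Ω : Type*} [MeasureSpace Ω] [IsProbabilityMeasure (ℙ : Measure Ω)] {X Y : Ω → ℝ}

lemma integrable_exp_I_mul_ofReal_comp (hX : AEStronglyMeasurable X ℙ) (t : ℝ) :
    Integrable (fun ω => exp (I * ((t * X ω : ℝ) : ℂ))) ℙ := by
  have hcont : Continuous fun x : ℝ => exp (I * ((t * x : ℝ) : ℂ)) := by fun_prop
  exact Integrable.of_bound (hcont.comp_aestronglyMeasurable hX) 1
    (.of_forall fun ω => by simp [norm_exp])

lemma integrable_expITaylorRemainder_comp (hX2 : MemLp X 2 ℙ) (t : ℝ) :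
    Integrable (fun ω => expITaylorRemainder (t * X ω)) ℙ :=
  (integrable_exp_I_mul_ofReal_comp hX2.aestronglyMeasurable t).sub (((integrable_const 1).add
    (((hX2.integrable one_le_two).const_mul t).ofReal.const_mul I)).sub
    ((hX2.integrable_sq.const_mul (t ^ 2 / 2)).congr
      (.of_forall fun ω => by ring) : Integrable (fun ω => (t * X ω) ^ 2 / 2) ℙ).ofReal)

lemma charFun'_eq_add_integral_expITaylorRemainder (hX2 : MemLp X 2 ℙ) (t : ℝ) :
    charFun' X t = 1 + I * t * (∫ ω, X ω : ℝ) - (t : ℂ) ^ 2 / 2 * (∫ ω, X ω ^ 2 : ℝ)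
      + ∫ ω, expITaylorRemainder (t * X ω) := by
  have hlin : Integrable (fun ω => ((t * X ω : ℝ) : ℂ)) ℙ :=
    ((hX2.integrable one_le_two).const_mul t).ofReal
  have hsq : Integrable (fun ω => (((t * X ω) ^ 2 / 2 : ℝ) : ℂ)) ℙ :=
    ((hX2.integrable_sq.const_mul (t ^ 2 / 2)).congr (.of_forall fun ω => by ring) :
      Integrable (fun ω => (t * X ω) ^ 2 / 2) ℙ).ofReal
  have haff : Integrable (fun ω => 1 + I * ((t * X ω : ℝ) : ℂ)) ℙ :=
    (integrable_const 1).add (hlin.const_mul I)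
  have hpoly : Integrable
      (fun ω => 1 + I * ((t * X ω : ℝ) : ℂ) - (((t * X ω) ^ 2 / 2 : ℝ) : ℂ)) ℙ := haff.sub hsq
  simp only [expITaylorRemainder]
  rw [integral_sub (integrable_exp_I_mul_ofReal_comp hX2.aestronglyMeasurable t) hpoly,
    integral_sub haff hsq,
    integral_add (integrable_const 1) (hlin.const_mul I), integral_const_mul,
    integral_complex_ofReal, integral_complex_ofReal, integral_const_mul]
  simp_rw [mul_pow, mul_div_right_comm _ (X _ ^ 2)]
  rw [integral_const_mul]
  simp only [charFun', ofReal_mul, integral_const, probReal_univ, one_smul, ofReal_div, ofReal_pow,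
    ofReal_ofNat]
  ring

lemma norm_charFun'_sub_charFun'_le (hX3 : MemLp X 3 ℙ) (hY3 : MemLp Y 3 ℙ)
    (h1 : ∫ ω, X ω = ∫ ω, Y ω) (h2 : ∫ ω, X ω ^ 2 = ∫ ω, Y ω ^ 2) (t : ℝ) :
    ‖charFun' Y t - charFun' X t‖ ≤
      |t| ^ 3 / 2 * ((∫ ω, |Y ω - X ω| * X ω ^ 2) + ∫ ω, |Y ω - X ω| * Y ω ^ 2) := by
  have hX2 := hX3.mono_exponent (by norm_num : (2 : ℝ≥0∞) ≤ 3)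
  have hY2 := hY3.mono_exponent (by norm_num : (2 : ℝ≥0∞) ≤ 3)
  rw [charFun'_eq_add_integral_expITaylorRemainder hX2,
    charFun'_eq_add_integral_expITaylorRemainder hY2, h1, h2, add_sub_add_left_eq_sub,
    ← integral_sub (integrable_expITaylorRemainder_comp hY2 t)
      (integrable_expITaylorRemainder_comp hX2 t)]
  have hXD : Integrable (fun ω => |Y ω - X ω| * X ω ^ 2) ℙ :=
    integrable_abs_mul_sq_s14 (hY3.sub hX3) hX3
  have hYD : Integrable (fun ω => |Y ω - X ω| * Y ω ^ 2) ℙ :=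
    integrable_abs_mul_sq_s14 (hY3.sub hX3) hY3
  rw [← integral_add hXD hYD, ← integral_const_mul]
  refine norm_integral_le_of_norm_le ((hXD.add hYD).const_mul _) (.of_forall fun ω => ?_)
  refine (norm_expITaylorRemainder_sub_le (t * X ω) (t * Y ω)).trans_eq ?_
  rw [← mul_sub, abs_mul, mul_pow, mul_pow, ← sq_abs t]
  ring

lemma norm_charFun'_sub_charFun'_le_of_abs_moment_three_le
    (hX3 : MemLp X 3 ℙ) (hY3 : MemLp Y 3 ℙ)
    (h1 : ∫ ω, X ω = ∫ ω, Y ω) (h2 : ∫ ω, X ω ^ 2 = ∫ ω, Y ω ^ 2) {CX Cr : ℝ}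
    (h3X : ∫ ω, |X ω| ^ 3 ≤ CX) (h3Y : ∫ ω, |Y ω| ^ 3 ≤ CX) (h3r : ∫ ω, |Y ω - X ω| ^ 3 ≤ Cr)
    (t : ℝ) :
    ‖charFun' Y t - charFun' X t‖ ≤ Cr ^ (1 / 3 : ℝ) * CX ^ (2 / 3 : ℝ) * |t| ^ 3 := by
  have hD3 : 0 ≤ ∫ ω, |Y ω - X ω| ^ 3 := integral_nonneg fun ω => by positivity
  have holder {Z : Ω → ℝ} (hZ : MemLp Z 3 ℙ) (hZC : ∫ ω, |Z ω| ^ 3 ≤ CX) :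
      ∫ ω, |Y ω - X ω| * Z ω ^ 2 ≤ Cr ^ (1 / 3 : ℝ) * CX ^ (2 / 3 : ℝ) :=
    (integral_abs_mul_sq_le_s14 (hY3.sub hX3) hZ).trans (mul_le_mul
      (Real.rpow_le_rpow hD3 h3r (by norm_num))
      (Real.rpow_le_rpow (integral_nonneg fun ω => by positivity) hZC (by norm_num))
      (by positivity) (Real.rpow_nonneg (hD3.trans h3r) _))
  refine (norm_charFun'_sub_charFun'_le hX3 hY3 h1 h2 t).trans ?_
  nlinarith [holder hX3 h3X, holder hY3 h3Y, pow_nonneg (abs_nonneg t) 3]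

end CharFun

lemma norm_mul_exp_sub_mul_exp_le (a b : ℂ) {t ρ : ℝ} (ht : |t| ≤ ρ) :
    ‖a * Complex.exp ((t ^ 2 / 2 : ℝ) : ℂ) - b * Complex.exp ((t ^ 2 / 2 : ℝ) : ℂ)‖
      ≤ ‖a - b‖ * Real.exp (ρ ^ 2 / 2) := by
  rw [← sub_mul, norm_mul, Complex.norm_exp, Complex.ofReal_re]
  have : t ^ 2 ≤ ρ ^ 2 := by simpa using pow_le_pow_left₀ (abs_nonneg t) ht 2
  gcongr

theorem log_charFun_perturbation_general {Ω : Type u} [MeasureSpace Ω]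
    [IsProbabilityMeasure (ℙ : Measure Ω)]
    (X Y : Ω → ℝ) (hXm : Measurable X) (hYm : Measurable Y)
    (hX3 : Integrable (fun ω => |X ω| ^ 3) ℙ)
    (hY3 : Integrable (fun ω => |Y ω| ^ 3) ℙ)
    (hmX : (∫ ω, X ω) = 0) (hmY : (∫ ω, Y ω) = 0)
    (hvX : variance X ℙ = 1) (hvY : variance Y ℙ = 1)
    (CX Cr : ℝ)
    (h3X : (∫ ω, |X ω| ^ 3) ≤ CX) (h3Y : (∫ ω, |Y ω| ^ 3) ≤ CX)
    (h3r : (∫ ω, |Y ω - X ω| ^ 3) ≤ Cr)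
    (Kr : ℝ) (hKr : Kr = Cr ^ ((1 : ℝ) / 3) * CX ^ ((2 : ℝ) / 3))
    (ρ N : ℝ) (hN : 0 ≤ N)
    (hXlog : ∀ t : ℝ, 0 < |t| → |t| ≤ ρ →
      charFun' X t ≠ 0 ∧
      ‖Complex.log (charFun' X t * Complex.exp ((t ^ 2 / 2 : ℝ) : ℂ))‖ ≤ N * |t| ^ 3)
    (hsmall₁ : ρ ^ 3 * N ≤ 1 / 100)
    (hsmall₂ : Kr * ρ ^ 3 * Real.exp (ρ ^ 2 / 2) ≤ 1 / 100) :
    ∀ t : ℝ, 0 < |t| → |t| ≤ ρ →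
      charFun' Y t ≠ 0 ∧
      ‖Complex.log (charFun' Y t * Complex.exp ((t ^ 2 / 2 : ℝ) : ℂ))‖
        ≤ (N + 2 * Kr * Real.exp (ρ ^ 2 / 2)) * |t| ^ 3 := by
  intro t ht htρ
  obtain ⟨hφX, hlogX⟩ := hXlog t ht htρ
  have hsecond : ∫ ω, X ω ^ 2 = ∫ ω, Y ω ^ 2 := by
    rw [← variance_of_integral_eq_zero hXm.aemeasurable hmX,
      ← variance_of_integral_eq_zero hYm.aemeasurable hmY, hvX, hvY]
  have hdiff : ‖charFun' Y t - charFun' X t‖ ≤ Kr * |t| ^ 3 :=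
    hKr ▸ norm_charFun'_sub_charFun'_le_of_abs_moment_three_le
      (memLp_of_integrable_abs_pow three_ne_zero hXm.aestronglyMeasurable hX3)
      (memLp_of_integrable_abs_pow three_ne_zero hYm.aestronglyMeasurable hY3)
      (hmX.trans hmY.symm) hsecond h3X h3Y h3r t
  have hKr0 : 0 ≤ Kr :=
    le_of_mul_le_mul_right (by simpa using (norm_nonneg _).trans hdiff) (pow_pos ht 3)
  have ht3 : |t| ^ 3 ≤ ρ ^ 3 := pow_le_pow_left₀ (abs_nonneg t) htρ 3
  have hzYX := (norm_mul_exp_sub_mul_exp_le (charFun' Y t) (charFun' X t) htρ).trans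
    (mul_le_mul_of_nonneg_right hdiff (Real.exp_pos _).le)
  have hsmallX : N * |t| ^ 3 ≤ 1 / 100 := by nlinarith [mul_le_mul_of_nonneg_left ht3 hN]
  have hsmallYX : Kr * |t| ^ 3 * Real.exp (ρ ^ 2 / 2) ≤ 1 / 100 := by
    nlinarith [mul_le_mul_of_nonneg_left ht3 (mul_nonneg hKr0 (Real.exp_pos (ρ ^ 2 / 2)).le)]
  obtain ⟨hzY, hlogY⟩ := Complex.ne_zero_and_norm_log_le_of_norm_sub_le
    (mul_ne_zero hφX (Complex.exp_ne_zero _)) (hlogX.trans hsmallX) (hzYX.trans hsmallYX)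
  refine ⟨left_ne_zero_of_mul hzY, hlogY.trans ?_⟩
  linarith

/-- **Stability of the logarithmic non-Gaussianity bound under a small perturbation.** -/
theorem log_charFun_perturbation {Ω : Type u} [MeasureSpace Ω]
    [IsProbabilityMeasure (ℙ : Measure Ω)]
    (X Y : Ω → ℝ) (hXm : Measurable X) (hYm : Measurable Y)
    (hX3 : Integrable (fun ω => |X ω| ^ 3) ℙ)
    (hY3 : Integrable (fun ω => |Y ω| ^ 3) ℙ)
    (hr3 : Integrable (fun ω => |Y ω - X ω| ^ 3) ℙ)
    (hmX : (∫ ω, X ω) = 0) (hmY : (∫ ω, Y ω) = 0)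
    (hvX : variance X ℙ = 1) (hvY : variance Y ℙ = 1)
    (CX Cr : ℝ)
    (h3X : (∫ ω, |X ω| ^ 3) ≤ CX) (h3Y : (∫ ω, |Y ω| ^ 3) ≤ CX)
    (h3r : (∫ ω, |Y ω - X ω| ^ 3) ≤ Cr)
    (Kr : ℝ) (hKr : Kr = Cr ^ ((1 : ℝ) / 3) * CX ^ ((2 : ℝ) / 3))
    (ρ N : ℝ) (hρ : 0 < ρ) (hN : 0 ≤ N)
    (hXlog : ∀ t : ℝ, 0 < |t| → |t| ≤ ρ →
      charFun' X t ≠ 0 ∧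
      ‖Complex.log (charFun' X t * Complex.exp ((t ^ 2 / 2 : ℝ) : ℂ))‖ ≤ N * |t| ^ 3)
    (hsmall₁ : ρ ^ 3 * N ≤ 1 / 100)
    (hsmall₂ : Kr * ρ ^ 3 * Real.exp (ρ ^ 2 / 2) ≤ 1 / 100) :
    ∀ t : ℝ, 0 < |t| → |t| ≤ ρ →
      charFun' Y t ≠ 0 ∧
      ‖Complex.log (charFun' Y t * Complex.exp ((t ^ 2 / 2 : ℝ) : ℂ))‖
        ≤ (N + 2 * Kr * Real.exp (ρ ^ 2 / 2)) * |t| ^ 3 :=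
  log_charFun_perturbation_general X Y hXm hYm hX3 hY3 hmX hmY hvX hvY CX Cr h3X h3Y h3r Kr hKr ρ N
    hN hXlog hsmall₁ hsmall₂
end
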